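/- For any polygon P with nonzero signed area, 2·CCM(P) − 3·CM(P) = (1/(2A(P)))·( Σi (xi x_{i+1} + yi y_{i+1})(yi − y_{i+1}), Σi (xi x_{i+1} + yi y_{i+1})(x_{i+1} − xi) ), where CCM and CM are given by their coordinate formulas. -/

import Mathlib

/-!
Shifting the index in the term `yᵢ |Vᵢ₋₁|²` turns the `x`-numerator of `CCM` into
`∑ (yᵢ₊₁ |Vᵢ|² - yᵢ |Vᵢ₊₁|²)`, and each summand of this splits as the corresponding summand of
the `x`-numerator of `CM` plus `(Vᵢ · Vᵢ₊₁)(yᵢ - yᵢ₊₁)`; likewise for `y`. Since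
`2 / (4A) = 3 / (6A) = 1 / (2A)`, the `CM` parts cancel in `2 CCM - 3 CM`.
-/

open Finset

/-- Squared norm of a plane vector. -/
noncomputable def nsq (v : ℝ × ℝ) : ℝ := v.1 ^ 2 + v.2 ^ 2

/-- Signed area of the closed polygon with vertices `V i`, indices mod `n`. -/
noncomputable def polyArea {n : ℕ} [NeZero n] (V : ZMod n → ℝ × ℝ) : ℝ :=
  (∑ i, ((V i).1 * (V (i + 1)).2 - (V (i + 1)).1 * (V i).2)) / 2

/-- The coordinate formula for the circumcenter of mass of a polygon. -/
noncomputable def ccmF {n : ℕ} [NeZero n] (V : ZMod n → ℝ × ℝ) : ℝ × ℝ :=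
  (4 * polyArea V)⁻¹ •
    ((∑ i, (V i).2 * (nsq (V (i - 1)) - nsq (V (i + 1)))),
     (∑ i, -(V i).1 * (nsq (V (i - 1)) - nsq (V (i + 1)))))

/-- The centroid of the homogeneous lamina bounded by the polygon. -/
noncomputable def cmF {n : ℕ} [NeZero n] (V : ZMod n → ℝ × ℝ) : ℝ × ℝ :=
  (6 * polyArea V)⁻¹ •
    ((∑ i, ((V i).1 + (V (i + 1)).1) * ((V i).1 * (V (i + 1)).2 - (V (i + 1)).1 * (V i).2)),
     (∑ i, ((V i).2 + (V (i + 1)).2) * ((V i).1 * (V (i + 1)).2 - (V (i + 1)).1 * (V i).2)))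


theorem sum_mul_sub_pred_succ {G R : Type*} [AddCommGroup G] [Fintype G] [NonUnitalNonAssocRing R]
    (a : G) (g h : G → R) :
    ∑ i, g i * (h (i - a) - h (i + a)) = ∑ i, (g (i + a) * h i - g i * h (i + a)) := by
  have shift : ∑ i, g (i + a) * h i = ∑ i, g i * h (i - a) :=
    Fintype.sum_equiv (Equiv.addRight a) _ _ fun i => by simp
  simp only [mul_sub, sum_sub_distrib, ← shift]

section

variable {n : ℕ} [NeZero n] (V : ZMod n → ℝ × ℝ)

theorem ccm_numerator_fst :
    ∑ i, (V i).2 * (nsq (V (i - 1)) - nsq (V (i + 1))) =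
      ∑ i, ((V i).1 + (V (i + 1)).1) * ((V i).1 * (V (i + 1)).2 - (V (i + 1)).1 * (V i).2) +
      ∑ i, ((V i).1 * (V (i + 1)).1 + (V i).2 * (V (i + 1)).2) * ((V i).2 - (V (i + 1)).2) := by
  rw [sum_mul_sub_pred_succ 1 (fun i => (V i).2) (fun i => nsq (V i)), ← sum_add_distrib]
  refine sum_congr rfl fun i _ => ?_
  simp only [nsq]
  ring

theorem ccm_numerator_snd :
    ∑ i, -(V i).1 * (nsq (V (i - 1)) - nsq (V (i + 1))) =
      ∑ i, ((V i).2 + (V (i + 1)).2) * ((V i).1 * (V (i + 1)).2 - (V (i + 1)).1 * (V i).2) +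
      ∑ i, ((V i).1 * (V (i + 1)).1 + (V i).2 * (V (i + 1)).2) * ((V (i + 1)).1 - (V i).1) := by
  rw [sum_mul_sub_pred_succ 1 (fun i => -(V i).1) (fun i => nsq (V i)), ← sum_add_distrib]
  refine sum_congr rfl fun i _ => ?_
  simp only [nsq]
  ring

end

theorem stmt7_general (n : ℕ) [NeZero n] (V : ZMod n → ℝ × ℝ) :
    (2 : ℝ) • ccmF V - (3 : ℝ) • cmF V =
      (2 * polyArea V)⁻¹ •
        ((∑ i, ((V i).1 * (V (i + 1)).1 + (V i).2 * (V (i + 1)).2) * ((V i).2 - (V (i + 1)).2)),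
         (∑ i, ((V i).1 * (V (i + 1)).1 + (V i).2 * (V (i + 1)).2) * ((V (i + 1)).1 - (V i).1))) := by
  have ccm_coeff : (2 : ℝ) * (4 * polyArea V)⁻¹ = (2 * polyArea V)⁻¹ := by
    rw [mul_inv, mul_inv]; ring
  have cm_coeff : (3 : ℝ) * (6 * polyArea V)⁻¹ = (2 * polyArea V)⁻¹ := by
    rw [mul_inv, mul_inv]; ring
  rw [ccmF, cmF, ccm_numerator_fst, ccm_numerator_snd, ← Prod.mk_add_mk, smul_smul, smul_smul,
    ccm_coeff, cm_coeff, smul_add, add_sub_cancel_left]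

theorem stmt7 (n : ℕ) [NeZero n] (V : ZMod n → ℝ × ℝ) (hA : polyArea V ≠ 0) :
    (2 : ℝ) • ccmF V - (3 : ℝ) • cmF V =
      (2 * polyArea V)⁻¹ •
        ((∑ i, ((V i).1 * (V (i + 1)).1 + (V i).2 * (V (i + 1)).2) * ((V i).2 - (V (i + 1)).2)),
         (∑ i, ((V i).1 * (V (i + 1)).1 + (V i).2 * (V (i + 1)).2) * ((V (i + 1)).1 - (V i).1))) :=
  stmt7_general n V
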